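/- arXiv:2505.10262 — 2 statements merged into one kernel-verified Lean document; each statement's English description precedes it below -/
import Mathlib

section
/- For a finite-horizon MDP, the optimal value function satisfies the Bellman optimality recursion: for every t < T and every state s, V*(t, s) = max_{a ∈ A} ( r(s, a) + E_{s' ∼ P(s, a)}[ V*(t+1, s') ] ), and V*(T, s) = 0. -/
section FiniteHorizonMDP

variable {S A : Type}

noncomputable def Vpi [Fintype S] (P : S → A → PMF S) (r : S → A → ℝ) (T : ℕ)
    (π : ℕ → S → A) (t : ℕ) (s : S) : ℝ :=
  if _h : t < T then
    r s (π t s) + ∑ s' : S, ((P s (π t s)) s').toReal * Vpi P r T π (t + 1) s'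
  else 0
termination_by T - t
decreasing_by omega

noncomputable def Vstar [Fintype S] (P : S → A → PMF S) (r : S → A → ℝ) (T : ℕ)
    (t : ℕ) (s : S) : ℝ :=
  ⨆ π : ℕ → S → A, Vpi P r T π t s

noncomputable def Vopt [Fintype S] (P : S → A → PMF S) (r : S → A → ℝ) (T : ℕ)
    (t : ℕ) (s : S) : ℝ :=
  if _h : t < T then
    ⨆ a : A, (r s a + ∑ s' : S, ((P s a) s').toReal * Vopt P r T (t + 1) s')
  else 0
termination_by T - t
decreasing_by omega

variable [Fintype S] [Fintype A] [Nonempty A]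

lemma vpi_le_vopt (P : S → A → PMF S) (r : S → A → ℝ) (T : ℕ) (π : ℕ → S → A) :
    ∀ t s, Vpi P r T π t s ≤ Vopt P r T t s := by
  suffices h : ∀ n t, T - t ≤ n → ∀ s, Vpi P r T π t s ≤ Vopt P r T t s by
    intro t s; exact h (T - t) t le_rfl s
  intro n
  induction n with
  | zero =>
    intro t ht s
    have h : ¬ t < T := by omega
    rw [Vpi, Vopt]; simp [h]
  | succ n ih =>
    intro t ht s
    rw [Vpi, Vopt]
    by_cases h : t < T
    · simp only [dif_pos h]
      have step : r s (π t s) + ∑ s' : S, ((P s (π t s)) s').toReal * Vpi P r T π (t+1) s'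
          ≤ r s (π t s) + ∑ s' : S, ((P s (π t s)) s').toReal * Vopt P r T (t+1) s' := by
        gcongr with s' _
        · exact ih (t+1) (by omega) s'
      exact step.trans (le_ciSup (f := fun a : A => r s a +
        ∑ s' : S, ((P s a) s').toReal * Vopt P r T (t+1) s')
        (Set.Finite.bddAbove (Set.finite_range _)) (π t s))
    · simp [h]

noncomputable def greedy (P : S → A → PMF S) (r : S → A → ℝ) (T : ℕ) : ℕ → S → A :=
  fun t s => Classical.choose (Finite.exists_max
    (fun a : A => r s a + ∑ s' : S, ((P s a) s').toReal * Vopt P r T (t + 1) s'))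

lemma greedy_spec (P : S → A → PMF S) (r : S → A → ℝ) (T t : ℕ) (s : S) (b : A) :
    r s b + ∑ s' : S, ((P s b) s').toReal * Vopt P r T (t + 1) s'
      ≤ r s (greedy P r T t s) + ∑ s' : S, ((P s (greedy P r T t s)) s').toReal
          * Vopt P r T (t + 1) s' :=
  Classical.choose_spec (Finite.exists_max
    (fun a : A => r s a + ∑ s' : S, ((P s a) s').toReal * Vopt P r T (t + 1) s')) b

lemma vpi_greedy (P : S → A → PMF S) (r : S → A → ℝ) (T : ℕ) :
    ∀ t s, Vpi P r T (greedy P r T) t s = Vopt P r T t s := by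
  suffices h : ∀ n t, T - t ≤ n → ∀ s, Vpi P r T (greedy P r T) t s = Vopt P r T t s by
    intro t s; exact h (T - t) t le_rfl s
  intro n
  induction n with
  | zero =>
    intro t ht s
    have h : ¬ t < T := by omega
    rw [Vpi, Vopt]; simp [h]
  | succ n ih =>
    intro t ht s
    rw [Vpi, Vopt]
    by_cases h : t < T
    · simp only [dif_pos h]
      have heq : r s (greedy P r T t s) + ∑ s' : S, ((P s (greedy P r T t s)) s').toReal
            * Vpi P r T (greedy P r T) (t+1) s'
          = r s (greedy P r T t s) + ∑ s' : S, ((P s (greedy P r T t s)) s').toReal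
            * Vopt P r T (t+1) s' := by
        congr 1
        exact Finset.sum_congr rfl fun s' _ => by rw [ih (t+1) (by omega) s']
      rw [heq]
      exact le_antisymm
        (le_ciSup (f := fun a : A => r s a +
          ∑ s' : S, ((P s a) s').toReal * Vopt P r T (t+1) s')
          (Set.Finite.bddAbove (Set.finite_range _)) (greedy P r T t s))
        (ciSup_le fun b => greedy_spec P r T t s b)
    · simp [h]

lemma vstar_eq_vopt (P : S → A → PMF S) (r : S → A → ℝ) (T t : ℕ) (s : S) :
    Vstar P r T t s = Vopt P r T t s := by
  apply le_antisymm
  · exact ciSup_le fun π => vpi_le_vopt P r T π t s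
  · rw [← vpi_greedy P r T t s]
    exact le_ciSup ⟨Vopt P r T t s, by rintro _ ⟨π, rfl⟩; exact vpi_le_vopt P r T π t s⟩
      (greedy P r T)

end FiniteHorizonMDP

/-- For a finite-horizon MDP, the optimal value function satisfies the
Bellman optimality recursion: for every `t < T` and every state `s`,
`V*(t, s) = max_{a ∈ A} (r(s, a) + E_{s' ~ P(s, a)}[V*(t+1, s')])`, and `V*(T, s) = 0`. -/
theorem bellman_optimality_recursion
    {S A : Type} [Fintype S] [Nonempty S] [Fintype A] [Nonempty A]
    (P : S → A → PMF S) (r : S → A → ℝ) (T : ℕ) :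
    (∀ t, t < T → ∀ s : S,
        Vstar P r T t s =
          ⨆ a : A, (r s a + ∑ s' : S, ((P s a) s').toReal * Vstar P r T (t + 1) s')) ∧
      ∀ s : S, Vstar P r T T s = 0 := by
  constructor
  · intro t ht s
    simp only [vstar_eq_vopt]
    rw [Vopt, dif_pos ht]
  · intro s
    rw [vstar_eq_vopt, Vopt]
    simp
end

section
/- For a finite-horizon MDP, there exists a deterministic time-dependent policy π* that is simultaneously optimal from every state and time: V_{π*}(t, s) = V*(t, s) for all t ≤ T and all states s. In particular, any policy that at each time t < T and state s selects an action attaining the maximum of the optimal action-value Q*(t, s, a) := r(s, a) + E_{s' ∼ P(s, a)}[V*(t+1, s')] over a ∈ A is such an optimal policy. -/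
/-- The optimal action-value function
`Q*(t, s, a) = r(s, a) + E_{s' ~ P(s, a)}[V*(t+1, s')]`. -/
noncomputable def Qstar {S A : Type} [Fintype S] (P : S → A → PMF S) (r : S → A → ℝ)
    (T : ℕ) (t : ℕ) (s : S) (a : A) : ℝ :=
  r s a + ∑ s' : S, ((P s a) s').toReal * Vstar P r T (t + 1) s'

/-! A policy that is greedy with respect to `Q*` dominates every other policy from every time and
state, by backward induction on `t`: once it is optimal from `t + 1`, its value at `t` is `Q*` of
its own action, while any other policy gets at most `Q*` of its action. Domination also shows that
the supremum defining `V*` is bounded and attained, so it is a genuine maximum. -/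

section Greedy

variable {S A : Type} [Fintype S] {P : S → A → PMF S} {r : S → A → ℝ} {T : ℕ}

theorem Vpi_of_lt (π : ℕ → S → A) {t : ℕ} (ht : t < T) (s : S) :
    Vpi P r T π t s =
      r s (π t s) + ∑ s' : S, ((P s (π t s)) s').toReal * Vpi P r T π (t + 1) s' := by
  rw [Vpi, dif_pos ht]

theorem Vpi_of_le (π : ℕ → S → A) {t : ℕ} (ht : T ≤ t) (s : S) : Vpi P r T π t s = 0 := by
  rw [Vpi, dif_neg (not_lt.mpr ht)]

theorem Vstar_eq_Vpi_of_forall_Vpi_le {π : ℕ → S → A} {t : ℕ} {s : S}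
    (hπ : ∀ π' : ℕ → S → A, Vpi P r T π' t s ≤ Vpi P r T π t s) :
    Vstar P r T t s = Vpi P r T π t s :=
  have : Nonempty (ℕ → S → A) := ⟨π⟩
  le_antisymm (ciSup_le hπ) (le_ciSup ⟨_, Set.forall_mem_range.mpr hπ⟩ π)

theorem Vpi_le_Qstar {π : ℕ → S → A} {t : ℕ} (ht : t < T) (s : S)
    (hle : ∀ s', Vpi P r T π (t + 1) s' ≤ Vstar P r T (t + 1) s') :
    Vpi P r T π t s ≤ Qstar P r T t s (π t s) := by
  rw [Vpi_of_lt π ht, Qstar]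
  gcongr with s'
  exact hle s'

theorem Vpi_eq_Qstar {π : ℕ → S → A} {t : ℕ} (ht : t < T) (s : S)
    (heq : ∀ s', Vpi P r T π (t + 1) s' = Vstar P r T (t + 1) s') :
    Vpi P r T π t s = Qstar P r T t s (π t s) := by
  rw [Vpi_of_lt π ht, Qstar]
  simp only [heq]

theorem Vpi_le_Vpi_of_greedy {π : ℕ → S → A}
    (hπ : ∀ t, t < T → ∀ s : S, ∀ a : A, Qstar P r T t s a ≤ Qstar P r T t s (π t s))
    (t : ℕ) (π' : ℕ → S → A) (s : S) : Vpi P r T π' t s ≤ Vpi P r T π t s := by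
  by_cases ht : t < T
  · have hopt : ∀ s', Vpi P r T π (t + 1) s' = Vstar P r T (t + 1) s' := fun s' =>
      (Vstar_eq_Vpi_of_forall_Vpi_le fun π'' => Vpi_le_Vpi_of_greedy hπ (t + 1) π'' s').symm
    calc Vpi P r T π' t s
        ≤ Qstar P r T t s (π' t s) := Vpi_le_Qstar ht s fun s' =>
          (Vpi_le_Vpi_of_greedy hπ (t + 1) π' s').trans (hopt s').le
      _ ≤ Qstar P r T t s (π t s) := hπ t ht s _
      _ = Vpi P r T π t s := (Vpi_eq_Qstar ht s hopt).symm
  · rw [Vpi_of_le π' (not_lt.mp ht), Vpi_of_le π (not_lt.mp ht)]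
termination_by T - t

end Greedy

theorem exists_simultaneously_optimal_policy_general
    {S A : Type} [Fintype S] [Fintype A] [Nonempty A]
    (P : S → A → PMF S) (r : S → A → ℝ) (T : ℕ) :
    (∃ πstar : ℕ → S → A, ∀ t ≤ T, ∀ s : S, Vpi P r T πstar t s = Vstar P r T t s) ∧
      ∀ π : ℕ → S → A,
        (∀ t, t < T → ∀ s : S, ∀ a : A, Qstar P r T t s a ≤ Qstar P r T t s (π t s)) →
        ∀ t ≤ T, ∀ s : S, Vpi P r T π t s = Vstar P r T t s := by
  have greedy_optimal : ∀ π : ℕ → S → A,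
      (∀ t, t < T → ∀ s : S, ∀ a : A, Qstar P r T t s a ≤ Qstar P r T t s (π t s)) →
      ∀ t ≤ T, ∀ s : S, Vpi P r T π t s = Vstar P r T t s := fun π hπ t _ s =>
    (Vstar_eq_Vpi_of_forall_Vpi_le fun π' => Vpi_le_Vpi_of_greedy hπ t π' s).symm
  choose greedy hgreedy using fun t s => Finite.exists_max (Qstar P r T t s)
  exact ⟨⟨greedy, greedy_optimal greedy fun t _ s => hgreedy t s⟩, greedy_optimal⟩

/-- For a finite-horizon MDP, there exists a deterministic
time-dependent policy `π*` that is simultaneously optimal from every state and time: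
`V_π*(t, s) = V*(t, s)` for all `t ≤ T` and all states `s`. In particular, any policy
that at each time `t < T` and state `s` selects an action attaining the maximum of the
optimal action-value `Q*(t, s, ·)` over `A` is such an optimal policy. -/
theorem exists_simultaneously_optimal_policy
    {S A : Type} [Fintype S] [Nonempty S] [Fintype A] [Nonempty A]
    (P : S → A → PMF S) (r : S → A → ℝ) (T : ℕ) :
    (∃ πstar : ℕ → S → A, ∀ t ≤ T, ∀ s : S, Vpi P r T πstar t s = Vstar P r T t s) ∧
      ∀ π : ℕ → S → A,
        (∀ t, t < T → ∀ s : S, ∀ a : A, Qstar P r T t s a ≤ Qstar P r T t s (π t s)) →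
        ∀ t ≤ T, ∀ s : S, Vpi P r T π t s = Vstar P r T t s :=
  exists_simultaneously_optimal_policy_general P r T
end
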